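/- Let Q be a nonempty dense linear order without endpoints, let a_1 > a_2 > ⋯ > a_m be a strictly decreasing tuple in Q, and let D₁, D₂ ⊆ Q^n be sets definable with parameters among {a_1,…,a_m}. If χ_v(D₁) = χ_v(D₂) for every vector v ∈ ℕ^{m+1}, then there is a definable bijection from D₁ onto D₂. -/

import Mathlib

open FirstOrder FirstOrder.Language

attribute [local instance] FirstOrder.Language.orderStructure

/-- A subset of `Q^n` is definable if it is defined by a first-order formula in the
language of orders with finitely many parameters from `Q`. -/
def DLODefinable {Q : Type*} [LinearOrder Q] {n : ℕ} (s : Set (Fin n → Q)) : Prop :=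
  ∃ A : Set Q, A.Finite ∧ A.Definable Language.order s

/-- The graph of `f` restricted to `D₁`, as a subset of `Q^(n+m)`. -/
def graphOn {Q : Type*} {n m : ℕ} (D₁ : Set (Fin n → Q))
    (f : (Fin n → Q) → (Fin m → Q)) : Set (Fin (n + m) → Q) :=
  {z | ∃ x ∈ D₁, z = Fin.append x (f x)}

/-- A definable bijection from `D₁ ⊆ Q^n` onto `D₂ ⊆ Q^m`: a bijection from `D₁` onto `D₂`
whose graph is a definable subset of `Q^(n+m)`. -/
def DefBij {Q : Type*} [LinearOrder Q] {n m : ℕ} (D₁ : Set (Fin n → Q))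
    (D₂ : Set (Fin m → Q)) : Prop :=
  ∃ f : (Fin n → Q) → (Fin m → Q), Set.BijOn f D₁ D₂ ∧ DLODefinable (graphOn D₁ f)

/-- `x, y ∈ Q^n` have the same order type over the tuple `a`. -/
def SameOrderType {Q : Type*} [LinearOrder Q] {m n : ℕ} (a : Fin m → Q)
    (x y : Fin n → Q) : Prop :=
  (∀ i j, x i < x j ↔ y i < y j) ∧
    ∀ i k, (x i < a k ↔ y i < a k) ∧ (a k < x i ↔ a k < y i)

/-- Membership in the `g`-th gap determined by the strictly decreasing tuple `a`:
`G_0 = (a 0, ∞)`, `G_g = (a g, a (g-1))` for `0 < g < m`, and `G_m = (-∞, a (m-1))`. -/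
def InGap {Q : Type*} [LinearOrder Q] {m : ℕ} (a : Fin m → Q) (g : Fin (m + 1)) (q : Q) :
    Prop :=
  (∀ h : (g : ℕ) < m, a ⟨g, h⟩ < q) ∧ ∀ j : Fin m, (j : ℕ) + 1 = (g : ℕ) → q < a j

/-- The number of distinct values among the coordinates of `x` lying in the `g`-th gap. -/
noncomputable def gapCount {Q : Type*} [LinearOrder Q] {m n : ℕ} (a : Fin m → Q)
    (x : Fin n → Q) (g : Fin (m + 1)) : ℕ :=
  Set.ncard {q : Q | (∃ i, x i = q) ∧ InGap a g q}

/-- The characteristic `χ_v(D)`: the number of equivalence classes of points of `D` under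
"same order type over `a`" all of whose members have gap-count vector `v`. -/
noncomputable def chi {Q : Type*} [LinearOrder Q] {m n : ℕ} (a : Fin m → Q)
    (v : Fin (m + 1) → ℕ) (D : Set (Fin n → Q)) : ℕ :=
  Set.ncard {C : Set (Fin n → Q) |
    ∃ x ∈ D, C = {y ∈ D | SameOrderType a x y} ∧ ∀ g, gapCount a x g = v g}

/-!
Over the parameters `a`, a definable subset of `Q^n` is a union of order types: two tuples of the
same order type over `a` are conjugate by an automorphism of a countable elementary substructure
(countable dense linear orders are ultrahomogeneous), so they satisfy the same formulas.
Two order types with the same gap counts are in bijection by a map each coordinate of which is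
either a parameter or a coordinate of the argument: the values lying in a gap are matched by their
rank within that gap. The hypothesis on the characteristics says that the order types occurring
in `D₁` and in `D₂` can be matched preserving gap counts; gluing the bijections between matched
types gives a bijection whose graph is a finite union of definable pieces.
-/

section General

theorem compare_eq_compare_iff {α : Type*} [LinearOrder α] {u v u' v' : α} :
    compare u v = compare u' v' ↔ (u < v ↔ u' < v') ∧ (v < u ↔ v' < u') := by
  refine ⟨fun h => ⟨?_, ?_⟩, fun ⟨hlt, hgt⟩ => ?_⟩
  · rw [← compare_lt_iff_lt, h, compare_lt_iff_lt]
  · rw [← compare_gt_iff_gt, h, compare_gt_iff_gt]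
  · rcases lt_trichotomy u v with h | rfl | h
    · rw [compare_lt_iff_lt.2 h, compare_lt_iff_lt.2 (hlt.1 h)]
    · rw [compare_eq_iff_eq.2 rfl, eq_comm, compare_eq_iff_eq]
      exact le_antisymm (not_lt.1 (hgt.not.1 (lt_irrefl u))) (not_lt.1 (hlt.not.1 (lt_irrefl u)))
    · rw [compare_gt_iff_gt.2 h, compare_gt_iff_gt.2 (hgt.1 h)]

theorem sumElim_comp_sumElim {X : Type*} {m n : ℕ} (a : Fin m → X) (z : Fin n → X)
    (π : Fin n → Fin n ⊕ Fin m) :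
    Sum.elim (Sum.elim z a ∘ π) a = Sum.elim z a ∘ Sum.elim π Sum.inr := by
  funext c
  rcases c with i | k <;> rfl

theorem graphOn_eq_iUnion {X ι : Type*} {n k : ℕ} (D : Set (Fin n → X)) (p : (Fin n → X) → ι)
    (F : ι → (Fin n → X) → Fin k → X) :
    graphOn D (fun z => F (p z) z) = ⋃ i, graphOn {z ∈ D | p z = i} (F i) := by
  ext u
  simp only [graphOn, Set.mem_iUnion]
  constructor
  · rintro ⟨z, hz, rfl⟩
    exact ⟨p z, z, ⟨hz, rfl⟩, rfl⟩
  · rintro ⟨i, z, ⟨hz, rfl⟩, rfl⟩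
    exact ⟨z, hz, rfl⟩

end General

section Fibers

variable {α β ι κ : Type*}

theorem bijOn_of_bijOn_fibers {p : α → ι} {q : β → κ} {σ : ι → κ} {F : ι → α → β} {s : Set α}
    {t : Set β} (hσ : Set.BijOn σ (p '' s) (q '' t))
    (hF : ∀ i ∈ p '' s, Set.BijOn (F i) {x ∈ s | p x = i} {y ∈ t | q y = σ i}) :
    Set.BijOn (fun x => F (p x) x) s t := by
  have hmem : ∀ x ∈ s, F (p x) x ∈ {y ∈ t | q y = σ (p x)} := fun x hx =>
    (hF _ ⟨x, hx, rfl⟩).mapsTo ⟨hx, rfl⟩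
  refine ⟨fun x hx => (hmem x hx).1, fun x hx x' hx' h => ?_, fun y hy => ?_⟩
  · have hpp : p x = p x' := hσ.injOn ⟨x, hx, rfl⟩ ⟨x', hx', rfl⟩ <| by
      rw [← (hmem x hx).2, ← (hmem x' hx').2]
      exact congrArg q h
    exact (hF _ ⟨x, hx, rfl⟩).injOn ⟨hx, rfl⟩ ⟨hx', hpp.symm⟩
      (h.trans (congrArg (F · x') hpp.symm))
  · obtain ⟨i, hi, hσi⟩ := hσ.surjOn ⟨y, hy, rfl⟩
    obtain ⟨x, ⟨hx, rfl⟩, rfl⟩ := (hF i hi).surjOn ⟨hy, hσi.symm⟩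
    exact ⟨x, hx, rfl⟩

theorem exists_bijOn_of_ncard_fiber_eq [Nonempty α] {A B : Set α} (κ : α → ι) (hA : A.Finite)
    (hB : B.Finite)
    (h : ∀ v, {t ∈ A | κ t = v}.ncard = {t ∈ B | κ t = v}.ncard) :
    ∃ σ : α → α, Set.BijOn σ A B ∧ ∀ t ∈ A, κ (σ t) = κ t := by
  have hfin {S : Set α} (hS : S.Finite) (v : ι) : {t ∈ S | κ t = v}.Finite :=
    hS.subset (Set.sep_subset _ _)
  have hF (v : ι) : ∃ F : α → α, Set.BijOn F {t ∈ A | κ t = v} {t ∈ B | κ t = v} :=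
    (hfin hA v).exists_bijOn_of_encard_eq <| by
      rw [← (hfin hA v).cast_ncard_eq, ← (hfin hB v).cast_ncard_eq, h v]
  choose F hF using hF
  have himage : κ '' A = κ '' B := by
    ext v
    change {t ∈ A | κ t = v}.Nonempty ↔ {t ∈ B | κ t = v}.Nonempty
    rw [← Set.ncard_pos (hfin hA v), ← Set.ncard_pos (hfin hB v), h v]
  refine ⟨fun t => F (κ t) t, bijOn_of_bijOn_fibers (σ := id) ?_ fun v _ => hF v,
    fun t ht => ((hF _).mapsTo ⟨ht, rfl⟩).2⟩
  rw [himage]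
  exact Set.bijOn_id _

end Fibers

section ModelTheory

theorem exists_equiv_comp_eq_of_le_iff {M : Type*} [LinearOrder M]
    [Language.order.Structure M] [Language.order.OrderedStructure M] [Countable M] [Nonempty M]
    [M ⊨ Language.order.dlo] {α : Type*} [Finite α] {v w : α → M}
    (h : ∀ i j, v i ≤ v j ↔ w i ≤ w j) : ∃ g : M ≃[Language.order] M, g ∘ v = w := by
  set S := Substructure.closure Language.order (Set.range v)
  -- the ambient `orderStructure` instance would give `S` a second, different structure
  let : Language.order.Structure S := Substructure.inducedStructure
  have hS : ∀ b, b ∈ S ↔ b ∈ Set.range v :=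
    Substructure.mem_closure_iff_of_isRelational Language.order _
  have hw : ∀ i j, v i = v j → w i = w j := fun i j hij =>
    le_antisymm ((h i j).1 hij.le) ((h j i).1 hij.ge)
  let f : S ↪o M := OrderEmbedding.ofMapLEIff (fun b => w ((hS b).1 b.2).choose) fun b b' => by
    rw [← h, ((hS b).1 b.2).choose_spec, ((hS b').1 b'.2).choose_spec]; rfl
  obtain ⟨g, hg⟩ := (isFraisseLimit_of_countable_nonempty_dlo M).ultrahomogeneous S
    (Substructure.fg_closure (Set.finite_range v)) (StrongHomClass.toEmbedding f)
  refine ⟨g, funext fun i => ?_⟩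
  have hvi : v i ∈ S := (hS _).2 ⟨i, rfl⟩
  calc g (v i) = f ⟨v i, hvi⟩ := (DFunLike.congr_fun hg ⟨v i, hvi⟩).symm
    _ = w i := hw _ _ ((hS _).1 hvi).choose_spec

theorem realize_iff_of_le_iff {Q : Type*} [LinearOrder Q] [DenselyOrdered Q] [NoMinOrder Q]
    [NoMaxOrder Q] [Nonempty Q] {α : Type*} [Finite α] (φ : Language.order.Formula α)
    {v w : α → Q} (h : ∀ i j, v i ≤ v j ↔ w i ≤ w j) : φ.Realize v ↔ φ.Realize w := by
  have : Language.order.OrderedStructure Q := ⟨fun _ => Iff.rfl⟩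
  obtain ⟨S, hvw, hS⟩ := exists_elementarySubstructure_card_eq Language.order
    (Set.range v ∪ Set.range w) Cardinal.aleph0 le_rfl
    (Cardinal.lift_le.2 ((Set.finite_range v).union (Set.finite_range w)).lt_aleph0.le)
    (by simp [order.card_eq_one, Cardinal.one_le_aleph0])
    (Cardinal.lift_le.2 (Cardinal.aleph0_le_mk Q))
  let : Language.order.Structure S := ElementarySubstructure.inducedStructure S
  have : Countable S := Cardinal.mk_le_aleph0_iff.1 (Cardinal.lift_inj.1 hS).le
  have : Language.order.OrderedStructure S := ⟨fun _ => Iff.rfl⟩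
  have : S ⊨ Language.order.dlo := ElementarySubstructure.theory_model
  let v' : α → S := fun i => ⟨v i, hvw (Or.inl ⟨i, rfl⟩)⟩
  let w' : α → S := fun i => ⟨w i, hvw (Or.inr ⟨i, rfl⟩)⟩
  obtain ⟨g, hg⟩ := exists_equiv_comp_eq_of_le_iff (v := v') (w := w') h
  calc φ.Realize v ↔ φ.Realize v' := S.subtype.map_formula φ v'
    _ ↔ φ.Realize (g ∘ v') := (StrongHomClass.realize_formula g φ).symm
    _ ↔ φ.Realize w := by rw [hg]; exact (S.subtype.map_formula φ w').symm

end ModelTheory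

section LinearOrder

variable {Q : Type*} [LinearOrder Q] {m n : ℕ}

section Rank

noncomputable def rankIn (S : Set Q) (q : Q) : ℕ :=
  {p ∈ S | p < q}.ncard

variable {S : Set Q}

theorem strictMonoOn_rankIn (hS : S.Finite) : StrictMonoOn (rankIn S) S := fun p hp _ _ hpq =>
  Set.ncard_lt_ncard ⟨fun _ hr => ⟨hr.1, hr.2.trans hpq⟩, fun h => lt_irrefl p (h ⟨hp, hpq⟩).2⟩
    (hS.subset (Set.sep_subset _ _))

theorem rankIn_image (hS : S.Finite) : rankIn S '' S = Set.Iio S.ncard := by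
  have hinj := (strictMonoOn_rankIn hS).injOn
  refine Set.eq_of_subset_of_ncard_le ?_ ?_ (Set.finite_Iio _)
  · rintro _ ⟨q, hq, rfl⟩
    exact Set.ncard_lt_ncard ⟨Set.sep_subset _ _, fun h => lt_irrefl q (h hq).2⟩ hS
  · rw [hinj.ncard_image, ← Finset.coe_range, Set.ncard_coe_finset, Finset.card_range]

end Rank

section OrderType

def orderType (a : Fin m → Q) (x : Fin n → Q) : Fin n ⊕ Fin m → Fin n ⊕ Fin m → Ordering :=
  fun c d => compare (Sum.elim x a c) (Sum.elim x a d)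

variable {a : Fin m → Q} {x y : Fin n → Q}

theorem sameOrderType_iff_orderType_eq : SameOrderType a x y ↔ orderType a x = orderType a y := by
  refine ⟨fun ⟨hx, ha⟩ => ?_, fun h => ⟨fun i j => ?_, fun i k => ⟨?_, ?_⟩⟩⟩
  · funext c d
    rcases c with i | k <;> rcases d with j | l <;>
      simp only [orderType, Sum.elim_inl, Sum.elim_inr, compare_eq_compare_iff]
    exacts [⟨hx i j, hx j i⟩, ha i l, ⟨(ha j k).2, (ha j k).1⟩]
  · exact (compare_eq_compare_iff.1 (congrFun₂ h (.inl i) (.inl j))).1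
  · exact (compare_eq_compare_iff.1 (congrFun₂ h (.inl i) (.inr k))).1
  · exact (compare_eq_compare_iff.1 (congrFun₂ h (.inl i) (.inr k))).2

theorem lt_iff_of_orderType_eq (h : orderType a x = orderType a y) (c d : Fin n ⊕ Fin m) :
    Sum.elim x a c < Sum.elim x a d ↔ Sum.elim y a c < Sum.elim y a d :=
  (compare_eq_compare_iff.1 (congrFun₂ h c d)).1

theorem eq_iff_of_orderType_eq (h : orderType a x = orderType a y) (c d : Fin n ⊕ Fin m) :
    Sum.elim x a c = Sum.elim x a d ↔ Sum.elim y a c = Sum.elim y a d := by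
  rw [← compare_eq_iff_eq, ← compare_eq_iff_eq (a := Sum.elim y a c)]
  exact Eq.congr_left (congrFun₂ h c d)

end OrderType

section Invariance

variable [DenselyOrdered Q] [NoMinOrder Q] [NoMaxOrder Q] [Nonempty Q] {a : Fin m → Q}
  {x y : Fin n → Q}

theorem Set.Definable.mem_of_orderType_eq {D : Set (Fin n → Q)}
    (hD : (Set.range a).Definable Language.order D) (h : orderType a x = orderType a y)
    (hx : x ∈ D) : y ∈ D := by
  obtain ⟨φ, rfl⟩ := Set.definable_iff_exists_formula_sum.1 hD
  refine (realize_iff_of_le_iff φ ?_).1 hx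
  have hle (c d) : Sum.elim x a c ≤ Sum.elim x a d ↔ Sum.elim y a c ≤ Sum.elim y a d := by
    simpa only [not_lt] using (lt_iff_of_orderType_eq h d c).not
  rintro (⟨_, k, rfl⟩ | i) (⟨_, l, rfl⟩ | j)
  exacts [hle (.inr k) (.inr l), hle (.inr k) (.inl j), hle (.inl i) (.inr l),
    hle (.inl i) (.inl j)]

end Invariance

section Gaps

variable {a : Fin m → Q} {g g' : Fin (m + 1)} {q q' : Q} {k : Fin m}

theorem exists_inGap (hq : q ∉ Set.range a) : ∃ g, InGap a g q := by
  have hP : ∃ g, g ≤ m ∧ ∀ h : g < m, a ⟨g, h⟩ < q := ⟨m, le_rfl, fun h => absurd h (lt_irrefl m)⟩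
  refine ⟨⟨Nat.find hP, Nat.lt_succ_of_le (Nat.find_spec hP).1⟩, (Nat.find_spec hP).2, ?_⟩
  intro j hj
  have hmin := Nat.find_min hP (m := j) (by simp only at hj; omega)
  push Not at hmin
  obtain ⟨hjm, hle⟩ := hmin (by omega)
  exact lt_of_le_of_ne hle fun he => hq ⟨j, he.symm⟩

variable (ha : StrictAnti a)
include ha

theorem InGap.lt_apply (hq : InGap a g q) (hk : (k : ℕ) < g) : q < a k :=
  (hq.2 ⟨g - 1, by omega⟩ (by simp only; omega)).trans_le
    (ha.antitone (by simp [Fin.le_def]; omega))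

theorem InGap.apply_lt (hq : InGap a g q) (hk : (g : ℕ) ≤ k) : a k < q :=
  (ha.antitone (by simp [Fin.le_def]; omega)).trans_lt (hq.1 (by omega))

theorem InGap.lt_of_lt (hq : InGap a g q) (hq' : InGap a g' q') (hg : (g : ℕ) < g') : q' < q :=
  (hq'.lt_apply ha (k := ⟨g, by omega⟩) hg).trans (hq.1 _)

theorem InGap.lt_apply_iff (hq : InGap a g q) (hq' : InGap a g q') : q < a k ↔ q' < a k := by
  rcases lt_or_ge (k : ℕ) g with hk | hk
  · exact iff_of_true (hq.lt_apply ha hk) (hq'.lt_apply ha hk)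
  · exact iff_of_false (hq.apply_lt ha hk).asymm (hq'.apply_lt ha hk).asymm

theorem InGap.apply_lt_iff (hq : InGap a g q) (hq' : InGap a g q') : a k < q ↔ a k < q' := by
  rcases lt_or_ge (k : ℕ) g with hk | hk
  · exact iff_of_false (hq.lt_apply ha hk).asymm (hq'.lt_apply ha hk).asymm
  · exact iff_of_true (hq.apply_lt ha hk) (hq'.apply_lt ha hk)

end Gaps

section Correspondence

/-- `gapCount a x g` is by definition the cardinality of this set. -/
def gapValues (a : Fin m → Q) (x : Fin n → Q) (g : Fin (m + 1)) : Set Q :=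
  {q | (∃ i, x i = q) ∧ InGap a g q}

variable {a : Fin m → Q} {x y : Fin n → Q}

theorem finite_gapValues (g : Fin (m + 1)) : (gapValues a x g).Finite :=
  (Set.finite_range x).subset fun _ hq => hq.1

theorem inGap_iff_of_orderType_eq (h : orderType a x = orderType a y) (g : Fin (m + 1))
    (i : Fin n) : InGap a g (x i) ↔ InGap a g (y i) :=
  and_congr (forall_congr' fun _ => lt_iff_of_orderType_eq h (.inr _) (.inl i))
    (forall_congr' fun _ => imp_congr_right fun _ => lt_iff_of_orderType_eq h (.inl i) (.inr _))

theorem gapCount_eq_of_orderType_eq (h : orderType a x = orderType a y) (g : Fin (m + 1)) :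
    gapCount a x g = gapCount a y g := by
  refine Set.ncard_congr (fun _ hq => y hq.1.choose) (fun q hq => ?_) (fun q q' hq hq' he => ?_)
    (fun _ ⟨⟨j, hj⟩, hjg⟩ => ?_)
  · obtain ⟨hi, hqg⟩ := hq
    exact ⟨⟨_, rfl⟩, (inGap_iff_of_orderType_eq h g _).1 (hi.choose_spec.symm ▸ hqg)⟩
  · rw [← hq.1.choose_spec, ← hq'.1.choose_spec]
    exact (eq_iff_of_orderType_eq h (.inl _) (.inl _)).2 he
  · subst hj
    have hx : ∃ i, x i = x j := ⟨j, rfl⟩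
    refine ⟨x j, ⟨hx, (inGap_iff_of_orderType_eq h g j).2 hjg⟩, ?_⟩
    exact (eq_iff_of_orderType_eq h (.inl _) (.inl _)).1 hx.choose_spec

/-- On the parameters and the values of `x`, this is the graph of an order isomorphism onto the
parameters and the values of `y` fixing `a`; it is total when the gap counts of `x` and `y` agree
(`exists_corresponds`). -/
def Corresponds (a : Fin m → Q) (x y : Fin n → Q) (p q : Q) : Prop :=
  (p = q ∧ p ∈ Set.range a) ∨
    ∃ g, p ∈ gapValues a x g ∧ q ∈ gapValues a y g ∧
      rankIn (gapValues a x g) p = rankIn (gapValues a y g) q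

variable {p p' q q' : Q}

theorem Corresponds.symm (h : Corresponds a x y p q) : Corresponds a y x q p := by
  rcases h with ⟨rfl, hp⟩ | ⟨g, hp, hq, hr⟩
  exacts [.inl ⟨rfl, hp⟩, .inr ⟨g, hq, hp, hr.symm⟩]

section

variable (ha : StrictAnti a)
include ha

theorem Corresponds.lt_iff (hp : Corresponds a x y p p') (hq : Corresponds a x y q q') :
    p < q ↔ p' < q' := by
  rcases hp with ⟨rfl, k, rfl⟩ | ⟨g, hp, hp', hr⟩ <;>
    rcases hq with ⟨rfl, l, rfl⟩ | ⟨g', hq, hq', hr'⟩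
  · rfl
  · exact hq.2.apply_lt_iff ha hq'.2
  · exact hp.2.lt_apply_iff ha hp'.2
  · rcases lt_trichotomy (g : ℕ) g' with hg | hg | hg
    · exact iff_of_false (hp.2.lt_of_lt ha hq.2 hg).asymm (hp'.2.lt_of_lt ha hq'.2 hg).asymm
    · obtain rfl : g = g' := Fin.ext hg
      rw [← (strictMonoOn_rankIn (finite_gapValues g)).lt_iff_lt hp hq,
        ← (strictMonoOn_rankIn (finite_gapValues g)).lt_iff_lt hp' hq', hr, hr']
    · exact iff_of_true (hq.2.lt_of_lt ha hp.2 hg) (hq'.2.lt_of_lt ha hp'.2 hg)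

theorem Corresponds.compare_eq (hp : Corresponds a x y p p') (hq : Corresponds a x y q q') :
    compare p q = compare p' q' :=
  compare_eq_compare_iff.2 ⟨hp.lt_iff ha hq, hq.lt_iff ha hp⟩

theorem Corresponds.left_unique (hp : Corresponds a x y p q) (hp' : Corresponds a x y p' q) :
    p = p' :=
  compare_eq_iff_eq.1 ((hp.compare_eq ha hp').trans (compare_eq_iff_eq.2 rfl))

end

theorem exists_corresponds (hv : ∀ g, gapCount a x g = gapCount a y g) (c : Fin n ⊕ Fin m) :
    ∃ d, Corresponds a x y (Sum.elim x a d) (Sum.elim y a c) := by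
  rcases c with i | k
  · by_cases hi : y i ∈ Set.range a
    · obtain ⟨k, hk⟩ := hi
      exact ⟨.inr k, .inl ⟨hk, k, rfl⟩⟩
    obtain ⟨g, hg⟩ := exists_inGap hi
    have hyi : y i ∈ gapValues a y g := ⟨⟨i, rfl⟩, hg⟩
    have hr : rankIn (gapValues a y g) (y i) ∈ rankIn (gapValues a x g) '' gapValues a x g := by
      rw [rankIn_image (finite_gapValues g)]
      exact ((rankIn_image (finite_gapValues g)).subset ⟨_, hyi, rfl⟩).trans_eq (hv g).symm
    obtain ⟨_, ⟨⟨j, rfl⟩, hj⟩, hr⟩ := hr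
    exact ⟨.inl j, .inr ⟨g, ⟨⟨j, rfl⟩, hj⟩, hyi, hr⟩⟩
  · exact ⟨.inr k, .inl ⟨rfl, k, rfl⟩⟩

end Correspondence

section Transfer

variable {a : Fin m → Q} {x y z : Fin n → Q} {π π' : Fin n → Fin n ⊕ Fin m}

theorem orderType_sumElim_comp (π : Fin n → Fin n ⊕ Fin m) :
    orderType a (Sum.elim z a ∘ π) =
      fun c d => orderType a z (Sum.elim π Sum.inr c) (Sum.elim π Sum.inr d) := by
  funext c d
  simp only [orderType, sumElim_comp_sumElim, Function.comp_apply]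

theorem corresponds_sumElim (hπ : ∀ i, Corresponds a x y (Sum.elim x a (π i)) (y i))
    (c : Fin n ⊕ Fin m) :
    Corresponds a x y (Sum.elim x a (Sum.elim π Sum.inr c)) (Sum.elim y a c) := by
  rcases c with i | k
  exacts [hπ i, .inl ⟨rfl, k, rfl⟩]

variable (ha : StrictAnti a)
include ha

theorem mapsTo_sumElim_comp (hπ : ∀ i, Corresponds a x y (Sum.elim x a (π i)) (y i)) :
    Set.MapsTo (fun z => Sum.elim z a ∘ π) {z | orderType a z = orderType a x}
      {z | orderType a z = orderType a y} := by
  intro z hz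
  change orderType a z = orderType a x at hz
  change orderType a (Sum.elim z a ∘ π) = orderType a y
  rw [orderType_sumElim_comp, hz]
  funext c d
  exact (corresponds_sumElim hπ c).compare_eq ha (corresponds_sumElim hπ d)

theorem sumElim_comp_sumElim_comp (hπ : ∀ i, Corresponds a x y (Sum.elim x a (π i)) (y i))
    (hπ' : ∀ i, Corresponds a y x (Sum.elim y a (π' i)) (x i))
    (hz : orderType a z = orderType a x) : Sum.elim (Sum.elim z a ∘ π) a ∘ π' = z := by
  rw [sumElim_comp_sumElim]
  funext i
  refine (eq_iff_of_orderType_eq hz (Sum.elim π Sum.inr (π' i)) (.inl i)).2 ?_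
  exact (corresponds_sumElim hπ (π' i)).left_unique ha (hπ' i).symm

theorem exists_bijOn_sumElim_comp (hv : ∀ g, gapCount a x g = gapCount a y g) :
    ∃ π : Fin n → Fin n ⊕ Fin m, Set.BijOn (fun z => Sum.elim z a ∘ π)
      {z | orderType a z = orderType a x} {z | orderType a z = orderType a y} := by
  choose π hπ using fun i => exists_corresponds hv (.inl i)
  choose π' hπ' using fun i => exists_corresponds (fun g => (hv g).symm) (.inl i)
  exact ⟨π, Set.InvOn.bijOn
    ⟨fun z hz => sumElim_comp_sumElim_comp ha hπ hπ' hz,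
      fun z hz => sumElim_comp_sumElim_comp ha hπ' hπ hz⟩
    (mapsTo_sumElim_comp ha hπ) (mapsTo_sumElim_comp ha hπ')⟩

end Transfer

section Characteristic

variable {a : Fin m → Q}

theorem sep_orderType_eq {D : Set (Fin n → Q)}
    (hD : ∀ x y, orderType a x = orderType a y → x ∈ D → y ∈ D) {x : Fin n → Q} (hx : x ∈ D) :
    {z ∈ D | orderType a z = orderType a x} = {z | orderType a z = orderType a x} :=
  Set.ext fun z => and_iff_right_of_imp fun hz => hD x z hz.symm hx

variable [Nonempty Q]

/-- Read off from an arbitrary realisation of `t`, so meaningful only for realised order types. -/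
noncomputable def typeGapCount (a : Fin m → Q) (t : Fin n ⊕ Fin m → Fin n ⊕ Fin m → Ordering) :
    Fin (m + 1) → ℕ :=
  fun g => gapCount a (Function.invFun (orderType a) t) g

theorem typeGapCount_orderType (x : Fin n → Q) :
    typeGapCount a (orderType a x) = fun g => gapCount a x g :=
  funext fun g => gapCount_eq_of_orderType_eq (Function.invFun_eq ⟨x, rfl⟩) g

theorem chi_eq_ncard {D : Set (Fin n → Q)}
    (hD : ∀ x y, orderType a x = orderType a y → x ∈ D → y ∈ D) (v : Fin (m + 1) → ℕ) :
    chi a v D = {t ∈ orderType a '' D | typeGapCount a t = v}.ncard := by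
  have hclass : ∀ x ∈ D, {y ∈ D | SameOrderType a x y} = {y | orderType a y = orderType a x} := by
    intro x hx
    ext y
    rw [Set.mem_sep_iff, sameOrderType_iff_orderType_eq, eq_comm]
    exact ⟨And.right, fun h => ⟨hD x y h.symm hx, h⟩⟩
  have hclasses : {C | ∃ x ∈ D, C = {y ∈ D | SameOrderType a x y} ∧ ∀ g, gapCount a x g = v g} =
      (fun t => {y | orderType a y = t}) '' {t ∈ orderType a '' D | typeGapCount a t = v} := by
    ext C
    constructor
    · rintro ⟨x, hx, rfl, hv⟩
      exact ⟨orderType a x, ⟨⟨x, hx, rfl⟩, (typeGapCount_orderType x).trans (funext hv)⟩,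
        (hclass x hx).symm⟩
    · rintro ⟨_, ⟨⟨x, hx, rfl⟩, hv⟩, rfl⟩
      exact ⟨x, hx, (hclass x hx).symm, congrFun ((typeGapCount_orderType x).symm.trans hv)⟩
  rw [chi, hclasses, Set.InjOn.ncard_image]
  rintro _ ⟨⟨x, -, rfl⟩, -⟩ _ ⟨⟨x', -, rfl⟩, -⟩ h
  exact (Set.ext_iff.1 h x).1 rfl

end Characteristic

section Definability

def compareFormula {β : Type*} (c d : β) : Ordering → Language.order.Formula β
  | .lt => Term.lt (Term.var (.inl c)) (Term.var (.inl d))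
  | .eq => Term.bdEqual (Term.var (.inl c)) (Term.var (.inl d))
  | .gt => Term.lt (Term.var (.inl d)) (Term.var (.inl c))

theorem realize_compareFormula {β : Type*} (c d : β) (o : Ordering) (v : β → Q) :
    (compareFormula c d o).Realize v ↔ compare (v c) (v d) = o := by
  have : Language.order.OrderedStructure Q := ⟨fun _ => Iff.rfl⟩
  cases o <;> simp [compareFormula, Formula.Realize, compare_lt_iff_lt, compare_gt_iff_gt]

theorem definable_setOf_compare_eq {α : Type*} (a : Fin m → Q) (c d : α ⊕ Fin m) (o : Ordering) :
    (Set.range a).Definable Language.order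
      {u : α → Q | compare (Sum.elim u a c) (Sum.elim u a d) = o} := by
  let e : α ⊕ Fin m → Set.range a ⊕ α := Sum.elim Sum.inr fun k => .inl ⟨a k, k, rfl⟩
  have he (u : α → Q) (c : α ⊕ Fin m) : Sum.elim (↑) u (e c) = Sum.elim u a c := by
    rcases c with i | k <;> rfl
  refine Set.definable_iff_exists_formula_sum.2 ⟨compareFormula (e c) (e d) o, ?_⟩
  ext u
  change _ ↔ (compareFormula (e c) (e d) o).Realize (Sum.elim (↑) u)
  rw [realize_compareFormula, he, he]
  rfl

theorem definable_setOf_orderType_eq (a : Fin m → Q)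
    (t : Fin n ⊕ Fin m → Fin n ⊕ Fin m → Ordering) :
    (Set.range a).Definable Language.order {z : Fin n → Q | orderType a z = t} := by
  have : {z : Fin n → Q | orderType a z = t} =
      ⋂ c, ⋂ d, {z | compare (Sum.elim z a c) (Sum.elim z a d) = t c d} := by
    ext z
    simp only [Set.mem_iInter, Set.mem_ofPred_eq, funext_iff]
    rfl
  rw [this]
  exact Set.definable_iInter_of_finite fun c => Set.definable_iInter_of_finite fun d =>
    definable_setOf_compare_eq a c d _

theorem definable_graphOn_sumElim_comp {a : Fin m → Q} {k : ℕ} {D : Set (Fin n → Q)}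
    (hD : (Set.range a).Definable Language.order D) (π : Fin k → Fin n ⊕ Fin m) :
    (Set.range a).Definable Language.order (graphOn D fun z => Sum.elim z a ∘ π) := by
  have : graphOn D (fun z => Sum.elim z a ∘ π) = (fun u => u ∘ Fin.castAdd k) ⁻¹' D ∩
      ⋂ i, {u | compare (Sum.elim u a (.inl (Fin.natAdd n i)))
        (Sum.elim u a (Sum.map (Fin.castAdd k) id (π i))) = .eq} := by
    ext u
    simp only [graphOn, Set.mem_inter_iff, Set.mem_preimage, Set.mem_iInter, Set.mem_ofPred_eq,
      compare_eq_iff_eq]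
    constructor
    · rintro ⟨z, hz, rfl⟩
      refine ⟨by simpa [Function.comp_def] using hz, fun i => ?_⟩
      rcases h : π i with j | l <;> simp [h]
    · rintro ⟨hD, hu⟩
      refine ⟨_, hD, funext fun l => Fin.addCases (fun j => ?_) (fun i => ?_) l⟩
      · simp
      · rw [Fin.append_right, Function.comp_apply]
        refine (hu i).trans ?_
        rcases π i <;> rfl
  rw [this]
  exact (hD.preimage_comp _).inter
    (Set.definable_iInter_of_finite fun i => definable_setOf_compare_eq a _ _ _)

end Definability

end LinearOrder

/-- If all characteristics over a decreasing parameter tuple `a` of two `a`-definable sets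
agree, then the sets are in definable bijection. -/
theorem dlo_chi_eq_defBij {Q : Type*} [LinearOrder Q] [DenselyOrdered Q] [NoMinOrder Q]
    [NoMaxOrder Q] [Nonempty Q] {n m : ℕ} (a : Fin m → Q) (ha : StrictAnti a)
    (D₁ D₂ : Set (Fin n → Q))
    (h₁ : (Set.range a).Definable Language.order D₁)
    (h₂ : (Set.range a).Definable Language.order D₂)
    (h : ∀ v : Fin (m + 1) → ℕ, chi a v D₁ = chi a v D₂) :
    DefBij D₁ D₂ := by
  have hsat₁ : ∀ x y, orderType a x = orderType a y → x ∈ D₁ → y ∈ D₁ :=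
    fun _ _ => h₁.mem_of_orderType_eq
  have hsat₂ : ∀ x y, orderType a x = orderType a y → x ∈ D₂ → y ∈ D₂ :=
    fun _ _ => h₂.mem_of_orderType_eq
  obtain ⟨σ, hσ, hσgap⟩ := exists_bijOn_of_ncard_fiber_eq (typeGapCount a)
    (Set.toFinite (orderType a '' D₁)) (Set.toFinite (orderType a '' D₂)) fun v => by
      rw [← chi_eq_ncard hsat₁, ← chi_eq_ncard hsat₂, h v]
  have hfiber (t) (ht : t ∈ orderType a '' D₁) : ∃ π : Fin n → Fin n ⊕ Fin m,
      Set.BijOn (fun z => Sum.elim z a ∘ π) {z ∈ D₁ | orderType a z = t}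
        {z ∈ D₂ | orderType a z = σ t} := by
    obtain ⟨x, hx, rfl⟩ := ht
    obtain ⟨y, hy, hyx⟩ := hσ.mapsTo ⟨x, hx, rfl⟩
    have hv := hσgap _ ⟨x, hx, rfl⟩
    rw [← hyx, typeGapCount_orderType, typeGapCount_orderType] at hv
    rw [← hyx, sep_orderType_eq hsat₁ hx, sep_orderType_eq hsat₂ hy]
    exact exists_bijOn_sumElim_comp ha fun g => (congrFun hv g).symm
  have : Nonempty (Fin n → Fin n ⊕ Fin m) := ⟨Sum.inl⟩
  choose! π hπ using hfiber
  refine ⟨fun z => Sum.elim z a ∘ π (orderType a z), bijOn_of_bijOn_fibers hσ hπ,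
    Set.range a, Set.finite_range a, ?_⟩
  rw [graphOn_eq_iUnion D₁ (orderType a) fun t z => Sum.elim z a ∘ π t]
  exact Set.definable_iUnion_of_finite fun t =>
    definable_graphOn_sumElim_comp (h₁.inter (definable_setOf_orderType_eq a t)) (π t)
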